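/- Let Σ be a predictive theory and A ⇒ B a predictive formula, and define Σ_A^B = {E + i ⇒ F + i | E ⇒ F ∈ Σ, i ∈ ℤ, l(A) − l(E) ≤ i ≤ u(B) − l(F)}. Then Σ ⊢ A ⇒ B if and only if A ⇒ B is provable from Σ_A^B using only the rules (Ax) and (Cut) (i.e., without the time-shift rule (Shf)). -/

import Mathlib

namespace TAI

variable {Y : Type*}

/-- Time shift of a set of time-annotated attributes: `M + j`. -/
def shiftS (M : Set (Y × ℤ)) (j : ℤ) : Set (Y × ℤ) :=
  (fun p : Y × ℤ => (p.1, p.2 + j)) '' M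

/-- Time shift of a finite set of time-annotated attributes: `A + j`. -/
def shiftF [DecidableEq Y] (A : Finset (Y × ℤ)) (j : ℤ) : Finset (Y × ℤ) :=
  A.image (fun p => (p.1, p.2 + j))

/-- An attribute implication over `Y` annotated by time points: a pair
`(A, B)` of finite subsets of `T_Y = Y × ℤ`, read as `A ⇒ B`. -/
abbrev Fml (Y : Type*) := Finset (Y × ℤ) × Finset (Y × ℤ)

/-- `A ⇒ B` is true in `M ⊆ T_Y`: for every `i ∈ ℤ`, `A + i ⊆ M` implies `B + i ⊆ M`. -/
def Holds [DecidableEq Y] (M : Set (Y × ℤ)) (φ : Fml Y) : Prop :=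
  ∀ i : ℤ, ↑(shiftF φ.1 i) ⊆ M → ↑(shiftF φ.2 i) ⊆ M

/-- The models of a theory `T`. -/
def Mods [DecidableEq Y] (T : Set (Fml Y)) : Set (Set (Y × ℤ)) :=
  {M | ∀ φ ∈ T, Holds M φ}

/-- Semantic entailment: `T ⊨ φ`. -/
def Entails [DecidableEq Y] (T : Set (Fml Y)) (φ : Fml Y) : Prop :=
  ∀ M ∈ Mods T, Holds M φ

/-- Semantic closure `[M]_Σ`. -/
def semClos [DecidableEq Y] (T : Set (Fml Y)) (M : Set (Y × ℤ)) : Set (Y × ℤ) :=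
  ⋂₀ {N | N ∈ Mods T ∧ M ⊆ N}

/-- Classical (time-point-free) truth: `M ⊨_PL A ⇒ B` iff `A ⊆ M` implies `B ⊆ M`. -/
def HoldsPL (M : Set (Y × ℤ)) (φ : Fml Y) : Prop :=
  ↑φ.1 ⊆ M → ↑φ.2 ⊆ M

/-- Classical models. -/
def ModsPL (T : Set (Fml Y)) : Set (Set (Y × ℤ)) :=
  {M | ∀ φ ∈ T, HoldsPL M φ}

/-- Classical semantic entailment `⊨_PL`. -/
def EntailsPL (T : Set (Fml Y)) (φ : Fml Y) : Prop :=
  ∀ M ∈ ModsPL T, HoldsPL M φ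

/-- `Σ^PL = {A + i ⇒ B + i | A ⇒ B ∈ Σ, i ∈ ℤ}`. -/
def shiftAll [DecidableEq Y] (T : Set (Fml Y)) : Set (Fml Y) :=
  {ψ | ∃ φ ∈ T, ∃ i : ℤ, ψ = (shiftF φ.1 i, shiftF φ.2 i)}

/-- One step of the syntactic closure construction. -/
def synStep [DecidableEq Y] (T : Set (Fml Y)) (M : Set (Y × ℤ)) : Set (Y × ℤ) :=
  M ∪ ⋃₀ {S | ∃ φ ∈ T, ∃ i : ℤ, ↑(shiftF φ.1 i) ⊆ M ∧ S = (↑(shiftF φ.2 i) : Set (Y × ℤ))}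

/-- `M_Σ^n`. -/
def synIter [DecidableEq Y] (T : Set (Fml Y)) (M : Set (Y × ℤ)) : ℕ → Set (Y × ℤ)
  | 0 => M
  | n + 1 => synStep T (synIter T M n)

/-- The syntactic closure `M_Σ^ω`. -/
def synClos [DecidableEq Y] (T : Set (Fml Y)) (M : Set (Y × ℤ)) : Set (Y × ℤ) :=
  ⋃ n : ℕ, synIter T M n

/-- Provability from `T` using the rules (Ax), (Cut) and (Shf). -/
inductive Prov [DecidableEq Y] (T : Set (Fml Y)) : Fml Y → Prop
  | hyp {φ : Fml Y} : φ ∈ T → Prov T φ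
  | ax (A B : Finset (Y × ℤ)) : Prov T (A ∪ B, A)
  | cut {A B C D : Finset (Y × ℤ)} :
      Prov T (A, B) → Prov T (B ∪ C, D) → Prov T (A ∪ C, D)
  | shf {A B : Finset (Y × ℤ)} (i : ℤ) :
      Prov T (A, B) → Prov T (shiftF A i, shiftF B i)

/-- Provability from `T` using only the rules (Ax) and (Cut) (no time shifts). -/
inductive ProvAC [DecidableEq Y] (T : Set (Fml Y)) : Fml Y → Prop
  | hyp {φ : Fml Y} : φ ∈ T → ProvAC T φ
  | ax (A B : Finset (Y × ℤ)) : ProvAC T (A ∪ B, A)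
  | cut {A B C D : Finset (Y × ℤ)} :
      ProvAC T (A, B) → ProvAC T (B ∪ C, D) → ProvAC T (A ∪ C, D)

/-- Provability from `T` using the rules (Ax) and (Cut_i). -/
inductive ProvCuti [DecidableEq Y] (T : Set (Fml Y)) : Fml Y → Prop
  | hyp {φ : Fml Y} : φ ∈ T → ProvCuti T φ
  | ax (A B : Finset (Y × ℤ)) : ProvCuti T (A ∪ B, A)
  | cuti {A B C D : Finset (Y × ℤ)} (i : ℤ) :
      ProvCuti T (A, shiftF B i) → ProvCuti T (B ∪ C, D) →
      ProvCuti T (A ∪ shiftF C i, shiftF D i)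

/-- Provability from `T` using the rules (Ref) and (Sim_i). -/
inductive ProvRS [DecidableEq Y] (T : Set (Fml Y)) : Fml Y → Prop
  | hyp {φ : Fml Y} : φ ∈ T → ProvRS T φ
  | ref (A : Finset (Y × ℤ)) : ProvRS T (A, A)
  | simi {A B C D : Finset (Y × ℤ)} (i : ℤ) :
      ProvRS T (A, shiftF B i) → ProvRS T (C, D) →
      ProvRS T (A ∪ shiftF (C \ B) i, shiftF D i)

/-- The closure operator induced by a closure system `S`. -/
def closOp (S : Set (Set (Y × ℤ))) (M : Set (Y × ℤ)) : Set (Y × ℤ) :=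
  ⋂₀ {N | N ∈ S ∧ M ⊆ N}

/-- The least time point occurring in a finite set (`0` for the empty set). -/
def lo (A : Finset (Y × ℤ)) : ℤ :=
  (A.image Prod.snd).min.untopD 0

/-- The greatest time point occurring in a finite set (`0` for the empty set). -/
def hi (A : Finset (Y × ℤ)) : ℤ :=
  (A.image Prod.snd).max.unbotD 0

/-- A formula `A ⇒ B` is predictive if `A ≠ ∅`, `B ≠ ∅`, and every time point in
`A` is less than or equal to every time point in `B`. -/
def Predictive (φ : Fml Y) : Prop :=
  φ.1.Nonempty ∧ φ.2.Nonempty ∧ ∀ p ∈ φ.1, ∀ q ∈ φ.2, p.2 ≤ q.2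

/-!
Time shifts commute with (Ax) and (Cut), so they can be pushed onto the hypotheses: `Σ ⊢ A ⇒ B`
iff `A ⇒ B` follows by (Ax) and (Cut) from all shifts of `Σ`, i.e. iff every point of `B` is reached
from `A` by forward chaining through the shifted formulas. In a predictive theory chaining never
goes back in time, so every point reached from `A` lies at or after `l(A)`, and every premise used
to reach a point at time at most `u(B)` again lies at time at most `u(B)`. Hence only the shifts
`E + i ⇒ F + i` with `E + i` not before `l(A)` and `F + i` not starting after `u(B)` are needed,
and these form `Σ_A^B`.
-/

theorem lo_eq_min' {A : Finset (Y × ℤ)} (hA : (A.image Prod.snd).Nonempty) :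
    lo A = (A.image Prod.snd).min' hA := by
  rw [lo, ← Finset.coe_min' hA]; rfl

theorem hi_eq_max' {A : Finset (Y × ℤ)} (hA : (A.image Prod.snd).Nonempty) :
    hi A = (A.image Prod.snd).max' hA := by
  rw [hi, ← Finset.coe_max' hA]; rfl

theorem lo_le {A : Finset (Y × ℤ)} {p : Y × ℤ} (hp : p ∈ A) : lo A ≤ p.2 := by
  rw [lo_eq_min' ⟨p.2, Finset.mem_image_of_mem _ hp⟩]
  exact Finset.min'_le _ _ (Finset.mem_image_of_mem _ hp)

theorem le_hi {A : Finset (Y × ℤ)} {p : Y × ℤ} (hp : p ∈ A) : p.2 ≤ hi A := by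
  rw [hi_eq_max' ⟨p.2, Finset.mem_image_of_mem _ hp⟩]
  exact Finset.le_max' _ _ (Finset.mem_image_of_mem _ hp)

theorem exists_mem_snd_eq_lo {A : Finset (Y × ℤ)} (hA : A.Nonempty) : ∃ p ∈ A, p.2 = lo A := by
  obtain ⟨p, hp, hmin⟩ := Finset.mem_image.mp (Finset.min'_mem _ (hA.image Prod.snd))
  exact ⟨p, hp, by rw [hmin, lo_eq_min']⟩

section Shift

variable [DecidableEq Y]

theorem mem_shiftF {A : Finset (Y × ℤ)} {i : ℤ} {p : Y × ℤ} :
    p ∈ shiftF A i ↔ ∃ q ∈ A, (q.1, q.2 + i) = p := by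
  simp [shiftF]

theorem shiftF_zero (A : Finset (Y × ℤ)) : shiftF A 0 = A := by
  ext p; simp [shiftF]

theorem shiftF_shiftF (A : Finset (Y × ℤ)) (i j : ℤ) :
    shiftF (shiftF A i) j = shiftF A (i + j) := by
  simp only [shiftF, Finset.image_image]
  congr 1; funext p; simp [add_assoc]

theorem shiftF_union (A B : Finset (Y × ℤ)) (i : ℤ) :
    shiftF (A ∪ B) i = shiftF A i ∪ shiftF B i := by
  simp [shiftF, Finset.image_union]

theorem predictive_of_mem_shiftAll {T : Set (Fml Y)} (hT : ∀ φ ∈ T, Predictive φ) :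
    ∀ ψ ∈ shiftAll T, Predictive ψ := by
  rintro ψ ⟨φ, hφ, i, rfl⟩
  obtain ⟨hE, hF, hle⟩ := hT φ hφ
  refine ⟨hE.image _, hF.image _, ?_⟩
  intro p hp q hq
  obtain ⟨e, he, rfl⟩ := mem_shiftF.mp hp
  obtain ⟨f, hf, rfl⟩ := mem_shiftF.mp hq
  simpa using hle e he f hf

/-- The set `Σ_A^B`. -/
def window (T : Set (Fml Y)) (A B : Finset (Y × ℤ)) : Set (Fml Y) :=
  {ψ | ∃ φ ∈ T, ∃ i : ℤ, lo A - lo φ.1 ≤ i ∧ i ≤ hi B - lo φ.2 ∧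
    ψ = (shiftF φ.1 i, shiftF φ.2 i)}

end Shift

/-- Points reachable from `A` by forward chaining through the formulas of `S`. -/
inductive Reach (S : Set (Fml Y)) (A : Finset (Y × ℤ)) : Y × ℤ → Prop
  | base {p : Y × ℤ} : p ∈ A → Reach S A p
  | step {φ : Fml Y} (hφ : φ ∈ S) (hprem : ∀ q ∈ φ.1, Reach S A q)
      {p : Y × ℤ} (hp : p ∈ φ.2) : Reach S A p

namespace Reach

variable {S : Set (Fml Y)} {A M : Finset (Y × ℤ)} {p : Y × ℤ}

theorem mono_base (h : A ⊆ M) (hp : Reach S A p) : Reach S M p := by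
  induction hp with
  | base hp => exact base (h hp)
  | step hφ _ hp ih => exact step hφ ih hp

theorem trans (hM : ∀ q ∈ M, Reach S A q) (hp : Reach S M p) : Reach S A p := by
  induction hp with
  | base hp => exact hM _ hp
  | step hφ _ hp ih => exact step hφ ih hp

theorem lo_le (hS : ∀ φ ∈ S, Predictive φ) (hp : Reach S A p) : lo A ≤ p.2 := by
  induction hp with
  | base hp => exact TAI.lo_le hp
  | step hφ _ hp ih =>
    obtain ⟨⟨q, hq⟩, -, hle⟩ := hS _ hφ
    exact (ih q hq).trans (hle q hq _ hp)

theorem window [DecidableEq Y] {T : Set (Fml Y)} (hT : ∀ φ ∈ T, Predictive φ) {B : Finset (Y × ℤ)}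
    (hp : Reach (shiftAll T) A p) (hpB : p.2 ≤ hi B) : Reach (TAI.window T A B) A p := by
  induction hp with
  | base hp => exact base hp
  | @step ψ hψ hprem p hp ih =>
    obtain ⟨φ, hφ, i, rfl⟩ := hψ
    obtain ⟨hE, hF, hle⟩ := hT φ hφ
    obtain ⟨f, hf, rfl⟩ := mem_shiftF.mp hp
    have hF_le_B : lo φ.2 + i ≤ hi B := by
      have := TAI.lo_le hf
      dsimp only at hpB
      omega
    obtain ⟨e₀, he₀, he₀_lo⟩ := exists_mem_snd_eq_lo hE
    have hA_le_E : lo A ≤ lo φ.1 + i :=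
      he₀_lo ▸ (hprem _ (mem_shiftF.mpr ⟨e₀, he₀, rfl⟩)).lo_le (predictive_of_mem_shiftAll hT)
    have hmem : (shiftF φ.1 i, shiftF φ.2 i) ∈ TAI.window T A B :=
      ⟨φ, hφ, i, by omega, by omega, rfl⟩
    refine step hmem (fun q hq => ih q hq ?_) hp
    obtain ⟨e, he, rfl⟩ := mem_shiftF.mp hq
    obtain ⟨f₀, hf₀, hf₀_lo⟩ := exists_mem_snd_eq_lo hF
    have he_le_F : e.2 ≤ lo φ.2 := hf₀_lo ▸ hle e he f₀ hf₀
    dsimp only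
    omega

end Reach

namespace ProvAC

variable [DecidableEq Y] {S : Set (Fml Y)} {A B C : Finset (Y × ℤ)}

theorem congr {A' B' : Finset (Y × ℤ)} (h : ProvAC S (A, B)) (hA : A = A') (hB : B = B') :
    ProvAC S (A', B') := by
  subst hA hB; exact h

theorem of_subset (h : B ⊆ A) : ProvAC S (A, B) :=
  (ax B A).congr (Finset.union_eq_right.mpr h) rfl

theorem refl (A : Finset (Y × ℤ)) : ProvAC S (A, A) :=
  of_subset le_rfl

theorem trans (h₁ : ProvAC S (A, B)) (h₂ : ProvAC S (B, C)) : ProvAC S (A, C) :=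
  (h₁.cut (h₂.congr (Finset.union_empty B).symm rfl)).congr (Finset.union_empty A) rfl

theorem union (h₁ : ProvAC S (A, B)) (h₂ : ProvAC S (A, C)) : ProvAC S (A, B ∪ C) := by
  have h₂' : ProvAC S (A, C ∪ A) := (h₂.cut (refl (C ∪ A))).congr (Finset.union_self A) rfl
  have h₁' : ProvAC S (C ∪ A, B ∪ C) := (h₁.cut (refl (B ∪ C))).congr (Finset.union_comm A C) rfl
  exact h₂'.trans h₁'

theorem of_forall_singleton (h : ∀ p ∈ B, ProvAC S (A, {p})) : ProvAC S (A, B) := by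
  classical
  induction B using Finset.induction_on with
  | empty => exact of_subset (Finset.empty_subset A)
  | insert a B _ ih =>
    rw [Finset.insert_eq]
    exact (h a (Finset.mem_insert_self a B)).union
      (ih fun q hq => h q (Finset.mem_insert_of_mem hq))

theorem reach {φ : Fml Y} (h : ProvAC S φ) : ∀ p ∈ φ.2, Reach S φ.1 p := by
  induction h with
  | hyp hφ => exact fun p hp => Reach.step hφ (fun q hq => Reach.base hq) hp
  | ax A B => exact fun p hp => Reach.base (Finset.mem_union_left _ hp)
  | cut _ _ ih₁ ih₂ =>
    intro p hp
    refine (ih₂ p hp).trans fun q hq => ?_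
    rcases Finset.mem_union.mp hq with hq | hq
    · exact (ih₁ q hq).mono_base Finset.subset_union_left
    · exact Reach.base (Finset.mem_union_right _ hq)

theorem singleton_of_reach {p : Y × ℤ} (h : Reach S A p) : ProvAC S (A, {p}) := by
  induction h with
  | base hp => exact of_subset (Finset.singleton_subset_iff.mpr hp)
  | @step φ hφ _ p hp ih =>
    exact ((of_forall_singleton ih).trans (hyp hφ)).trans
      (of_subset (Finset.singleton_subset_iff.mpr hp))

theorem of_reach (h : ∀ p ∈ B, Reach S A p) : ProvAC S (A, B) :=
  of_forall_singleton fun p hp => singleton_of_reach (h p hp)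

theorem shiftF_of_shiftAll {T : Set (Fml Y)} {φ : Fml Y} (h : ProvAC (shiftAll T) φ) (i : ℤ) :
    ProvAC (shiftAll T) (shiftF φ.1 i, shiftF φ.2 i) := by
  induction h with
  | hyp hψ =>
    obtain ⟨ψ, hψ, j, rfl⟩ := hψ
    exact hyp ⟨ψ, hψ, j + i, by simp [shiftF_shiftF]⟩
  | ax A B => exact (ax (shiftF A i) (shiftF B i)).congr (shiftF_union A B i).symm rfl
  | cut _ _ ih₁ ih₂ =>
    exact (ih₁.cut (ih₂.congr (shiftF_union _ _ i) rfl)).congr (shiftF_union _ _ i).symm rfl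

theorem prov {T : Set (Fml Y)} {φ : Fml Y} (h : ProvAC S φ) (hS : ∀ ψ ∈ S, Prov T ψ) :
    Prov T φ := by
  induction h with
  | hyp hψ => exact hS _ hψ
  | ax A B => exact Prov.ax A B
  | cut _ _ ih₁ ih₂ => exact ih₁.cut ih₂

end ProvAC

theorem Prov.provAC_shiftAll [DecidableEq Y] {T : Set (Fml Y)} {φ : Fml Y} (h : Prov T φ) :
    ProvAC (shiftAll T) φ := by
  induction h with
  | hyp hφ => exact ProvAC.hyp ⟨_, hφ, 0, by simp [shiftF_zero]⟩
  | ax A B => exact ProvAC.ax A B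
  | cut _ _ ih₁ ih₂ => exact ih₁.cut ih₂
  | shf i _ ih => exact ih.shiftF_of_shiftAll i

theorem predictive_prov_iff_provAC_general [DecidableEq Y]
    (T : Set (Fml Y)) (A B : Finset (Y × ℤ))
    (hT : ∀ φ ∈ T, Predictive φ) :
    Prov T (A, B) ↔
      ProvAC {ψ : Fml Y | ∃ φ ∈ T, ∃ i : ℤ,
          lo A - lo φ.1 ≤ i ∧ i ≤ hi B - lo φ.2 ∧
          ψ = (shiftF φ.1 i, shiftF φ.2 i)} (A, B) := by
  change Prov T (A, B) ↔ ProvAC (window T A B) (A, B)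
  constructor
  · intro h
    exact ProvAC.of_reach fun p hp =>
      (h.provAC_shiftAll.reach p hp).window hT (le_hi hp)
  · intro h
    refine h.prov ?_
    rintro ψ ⟨φ, hφ, i, -, -, rfl⟩
    exact (Prov.hyp hφ).shf i

/-- for a predictive theory `Σ` and predictive `A ⇒ B`,
`Σ ⊢ A ⇒ B` iff `A ⇒ B` is provable from `Σ_A^B` using only (Ax) and (Cut). -/
theorem predictive_prov_iff_provAC [DecidableEq Y] [Fintype Y] [Nonempty Y]
    (T : Set (Fml Y)) (A B : Finset (Y × ℤ))
    (hT : ∀ φ ∈ T, Predictive φ) (hAB : Predictive (A, B)) :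
    Prov T (A, B) ↔
      ProvAC {ψ : Fml Y | ∃ φ ∈ T, ∃ i : ℤ,
          lo A - lo φ.1 ≤ i ∧ i ≤ hi B - lo φ.2 ∧
          ψ = (shiftF φ.1 i, shiftF φ.2 i)} (A, B) :=
  predictive_prov_iff_provAC_general T A B hT

end TAI
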